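/- arXiv:1606.08431 — 2 statements merged into one kernel-verified Lean document; each statement's English description precedes it below -/
import Mathlib

section
/- Let A ∈ ℝ^{𝒩×𝒩} be symmetric, N : EuclideanSpace ℝ (Fin 𝒩) → ℝ continuously differentiable with gradient f, and E(u) = (1/2)·⟪u, A·u⟫ + N(u). Let Ψ ∈ ℝ^{𝒩×N} be any matrix and set A_r = Ψᵀ A Ψ. Let Δt > 0 and suppose the reduced coefficient vectors u_r⁺, u_r⁰ ∈ EuclideanSpace ℝ (Fin N) satisfy the reduced AVF step (u_r⁺ − u_r⁰) + (Δt/2)·A_r·(u_r⁺ + u_r⁰) + Δt·∫_0^1 Ψᵀ f(Ψ·(τ·u_r⁺ + (1−τ)·u_r⁰)) dτ = 0. Then E(Ψ·u_r⁺) − E(Ψ·u_r⁰) = −(1/Δt)·‖u_r⁺ − u_r⁰‖², and in particular E(Ψ·u_r⁺) ≤ E(Ψ·u_r⁰). -/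
open MeasureTheory Matrix
open scoped InnerProductSpace

/-!
Pairing the AVF step with `u⁺ - u⁰` turns each of its three terms into an exact difference:
for symmetric `T` one has
`⟪u⁺ - u⁰, T (u⁺ + u⁰)⟫ = ⟪u⁺, T u⁺⟫ - ⟪u⁰, T u⁰⟫`,
and by the fundamental theorem of calculus along the segment
`⟪u⁺ - u⁰, ∫₀¹ ∇N(τ u⁺ + (1-τ) u⁰) dτ⟫ = N u⁺ - N u⁰`. The Galerkin ROM is itself such a
gradient system, with stiffness `Ψᵀ A Ψ` and potential `N ∘ Ψ`, whose gradient is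
`Ψᵀ f (Ψ ·)`, and its energy is `E ∘ Ψ`.
-/

section GradientSystem

variable {E : Type*} [NormedAddCommGroup E] [InnerProductSpace ℝ E]

theorem LinearMap.IsSymmetric.inner_map_self_sub_inner_map_self {T : E →ₗ[ℝ] E}
    (hT : T.IsSymmetric) (u v : E) :
    ⟪u, T u⟫_ℝ - ⟪v, T v⟫_ℝ = ⟪u - v, T (u + v)⟫_ℝ := by
  rw [map_add, inner_sub_left, inner_add_right, inner_add_right, ← hT u v,
    real_inner_comm v (T u)]
  ring

theorem sub_eq_inner_integral_segment_of_hasGradientAt [CompleteSpace E] {N : E → ℝ}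
    {g : E → E} (hN : ∀ u, HasGradientAt N (g u) u) (hg : Continuous g) (a b : E) :
    N b - N a = ⟪b - a, ∫ τ in (0:ℝ)..1, g (τ • b + (1 - τ) • a)⟫_ℝ := by
  set p : ℝ → E := fun τ ↦ τ • b + (1 - τ) • a
  have hp : ∀ τ, HasDerivAt p (b - a) τ := fun τ ↦
    (((hasDerivAt_id τ).smul_const b).add
      (((hasDerivAt_id τ).const_sub 1).smul_const a)).congr_deriv (by simp [sub_eq_add_neg])
  have hNp : ∀ τ, HasDerivAt (fun t ↦ N (p t)) ⟪g (p τ), b - a⟫_ℝ τ := fun τ ↦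
    (hN (p τ)).hasFDerivAt.comp_hasDerivAt τ (hp τ)
  have hgp : Continuous fun τ ↦ g (p τ) := hg.comp (by fun_prop)
  calc N b - N a = N (p 1) - N (p 0) := by simp [p]
    _ = ∫ τ in (0:ℝ)..1, ⟪g (p τ), b - a⟫_ℝ :=
      (intervalIntegral.integral_eq_sub_of_hasDerivAt (fun τ _ ↦ hNp τ)
        ((hgp.inner continuous_const).intervalIntegrable 0 1)).symm
    _ = ∫ τ in (0:ℝ)..1, innerSL ℝ (b - a) (g (p τ)) := by
      simp only [innerSL_apply_apply, real_inner_comm (b - a)]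
    _ = ⟪b - a, ∫ τ in (0:ℝ)..1, g (p τ)⟫_ℝ :=
      (innerSL ℝ (b - a)).intervalIntegral_comp_comm (hgp.intervalIntegrable 0 1)

theorem energy_sub_of_avf_step [CompleteSpace E] {T : E →ₗ[ℝ] E} (hT : T.IsSymmetric)
    {N : E → ℝ} {g : E → E} (hN : ∀ u, HasGradientAt N (g u) u) (hg : Continuous g)
    {Δt : ℝ} (hΔt : Δt ≠ 0) {u₁ u₀ : E}
    (hstep : (u₁ - u₀) + (Δt / 2) • T (u₁ + u₀)
      + Δt • (∫ τ in (0:ℝ)..1, g (τ • u₁ + (1 - τ) • u₀)) = 0) :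
    (1 / 2 * ⟪u₁, T u₁⟫_ℝ + N u₁) - (1 / 2 * ⟪u₀, T u₀⟫_ℝ + N u₀)
      = -(1 / Δt) * ‖u₁ - u₀‖ ^ 2 := by
  have hpair := congrArg (⟪u₁ - u₀, ·⟫_ℝ) hstep
  simp only [inner_add_right, real_inner_smul_right, inner_zero_right,
    real_inner_self_eq_norm_sq, ← hT.inner_map_self_sub_inner_map_self,
    ← sub_eq_inner_integral_segment_of_hasGradientAt hN hg] at hpair
  field_simp
  linear_combination 2 * hpair

end GradientSystem

theorem HasGradientAt.comp_continuousLinearMap {E F : Type*} [NormedAddCommGroup E]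
    [InnerProductSpace ℝ E] [CompleteSpace E] [NormedAddCommGroup F] [InnerProductSpace ℝ F]
    [CompleteSpace F] {N : E → ℝ} {g : E} (L : F →L[ℝ] E) {u : F}
    (hN : HasGradientAt N g (L u)) :
    HasGradientAt (fun v ↦ N (L v)) (L.adjoint g) u := by
  rw [hasGradientAt_iff_hasFDerivAt] at hN ⊢
  refine (hN.comp u L.hasFDerivAt).congr_fderiv ?_
  ext v
  simp [ContinuousLinearMap.adjoint_inner_left]

namespace Matrix

variable {l m n : Type*} [Fintype m] [Fintype n] [DecidableEq n]

theorem toEuclideanLin_transpose_eq_adjoint [DecidableEq m] (M : Matrix m n ℝ) :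
    Mᵀ.toEuclideanLin = M.toEuclideanLin.adjoint := by
  rw [← conjTranspose_eq_transpose_of_trivial, toEuclideanLin_conjTranspose_eq_adjoint]

theorem toEuclideanLin_mul_apply [DecidableEq m] (M : Matrix l m ℝ) (P : Matrix m n ℝ)
    (x : EuclideanSpace ℝ n) :
    (M * P).toEuclideanLin x = M.toEuclideanLin (P.toEuclideanLin x) := by
  simp [toLpLin_apply, mulVec_mulVec]

theorem inner_toEuclideanLin_transpose_mul_mul_self [DecidableEq m] (A : Matrix m m ℝ)
    (Ψ : Matrix m n ℝ) (u : EuclideanSpace ℝ n) :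
    ⟪u, (Ψᵀ * A * Ψ).toEuclideanLin u⟫_ℝ
      = ⟪Ψ.toEuclideanLin u, A.toEuclideanLin (Ψ.toEuclideanLin u)⟫_ℝ := by
  rw [toEuclideanLin_mul_apply, toEuclideanLin_mul_apply, toEuclideanLin_transpose_eq_adjoint,
    LinearMap.adjoint_inner_right]

theorem IsSymm.isSymmetric_toEuclideanLin_transpose_mul_mul {A : Matrix m m ℝ} (hA : A.IsSymm)
    (Ψ : Matrix m n ℝ) : (Ψᵀ * A * Ψ).toEuclideanLin.IsSymmetric := by
  rw [isSymmetric_toEuclideanLin_iff, ← conjTranspose_eq_transpose_of_trivial]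
  exact isHermitian_conjTranspose_mul_mul Ψ (isHermitian_iff_isSymm.mpr hA)

end Matrix

theorem HasGradientAt.comp_toEuclideanLin {m n : Type*} [Fintype m] [Fintype n] [DecidableEq m]
    [DecidableEq n] {N : EuclideanSpace ℝ m → ℝ} {g : EuclideanSpace ℝ m} (Ψ : Matrix m n ℝ)
    {u : EuclideanSpace ℝ n} (hN : HasGradientAt N g (Ψ.toEuclideanLin u)) :
    HasGradientAt (fun v ↦ N (Ψ.toEuclideanLin v)) (Ψᵀ.toEuclideanLin g) u := by
  have := hN.comp_continuousLinearMap (LinearMap.toContinuousLinearMap Ψ.toEuclideanLin)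
  rwa [← LinearMap.adjoint_toContinuousLinearMap,
    ← Matrix.toEuclideanLin_transpose_eq_adjoint] at this

/-- Unconditional energy stability of the Galerkin (POD) reduced order
model discretized in time by the AVF method: with symmetric stiffness matrix `A`, discrete
energy `E u = (1/2)⟪u, Au⟫ + N u` with `f = ∇N`, any basis matrix `Ψ`, reduced stiffness
matrix `A_r = Ψᵀ A Ψ`, and reduced AVF step
`(u_r⁺ - u_r⁰) + (Δt/2) A_r (u_r⁺ + u_r⁰) + Δt ∫_0^1 Ψᵀ f(Ψ(τ u_r⁺ + (1-τ) u_r⁰)) dτ = 0`,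
one has `E (Ψ u_r⁺) - E (Ψ u_r⁰) = -(1/Δt) ‖u_r⁺ - u_r⁰‖²`, so `E (Ψ u_r⁺) ≤ E (Ψ u_r⁰)`. -/
theorem rom_avf_energy_stable {𝒩 Nr : ℕ} (A : Matrix (Fin 𝒩) (Fin 𝒩) ℝ) (hA : A.IsSymm)
    (N : EuclideanSpace ℝ (Fin 𝒩) → ℝ)
    (f : EuclideanSpace ℝ (Fin 𝒩) → EuclideanSpace ℝ (Fin 𝒩))
    (hN : ∀ u, HasGradientAt N (f u) u) (hf : Continuous f)
    (E : EuclideanSpace ℝ (Fin 𝒩) → ℝ)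
    (hE : ∀ u : EuclideanSpace ℝ (Fin 𝒩),
      E u = (1 / 2) * ⟪u, Matrix.toEuclideanLin A u⟫_ℝ + N u)
    (Ψ : Matrix (Fin 𝒩) (Fin Nr) ℝ) (Ar : Matrix (Fin Nr) (Fin Nr) ℝ)
    (hAr : Ar = Ψᵀ * A * Ψ)
    (Δt : ℝ) (hΔt : 0 < Δt) (urp ur0 : EuclideanSpace ℝ (Fin Nr))
    (hstep : (urp - ur0) + (Δt / 2) • Matrix.toEuclideanLin Ar (urp + ur0)
        + Δt • (∫ τ in (0:ℝ)..1,
            Matrix.toEuclideanLin Ψᵀ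
              (f (Matrix.toEuclideanLin Ψ (τ • urp + (1 - τ) • ur0)))) = 0) :
    E (Matrix.toEuclideanLin Ψ urp) - E (Matrix.toEuclideanLin Ψ ur0)
        = -(1 / Δt) * ‖urp - ur0‖ ^ 2
      ∧ E (Matrix.toEuclideanLin Ψ urp) ≤ E (Matrix.toEuclideanLin Ψ ur0) := by
  subst hAr
  have hE_reduced : ∀ u, E (Ψ.toEuclideanLin u)
      = 1 / 2 * ⟪u, (Ψᵀ * A * Ψ).toEuclideanLin u⟫_ℝ + N (Ψ.toEuclideanLin u) := by
    intro u
    rw [hE, inner_toEuclideanLin_transpose_mul_mul_self]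
  have hg : Continuous fun u ↦ Ψᵀ.toEuclideanLin (f (Ψ.toEuclideanLin u)) :=
    (LinearMap.continuous_of_finiteDimensional _).comp
      (hf.comp (LinearMap.continuous_of_finiteDimensional _))
  have hdiff := energy_sub_of_avf_step (hA.isSymmetric_toEuclideanLin_transpose_mul_mul Ψ)
    (fun u ↦ (hN _).comp_toEuclideanLin Ψ) hg hΔt.ne' hstep
  rw [← hE_reduced, ← hE_reduced] at hdiff
  refine ⟨hdiff, sub_nonpos.mp ?_⟩
  rw [hdiff]
  exact mul_nonpos_of_nonpos_of_nonneg (neg_nonpos.mpr (by positivity)) (sq_nonneg _)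
end

section
/- Let A ∈ ℝ^{𝒩×𝒩} be symmetric, N : EuclideanSpace ℝ (Fin 𝒩) → ℝ continuously differentiable with gradient f, E(u) = (1/2)·⟪u, A·u⟫ + N(u), let R ∈ ℝ^{𝒩×𝒩} be invertible with M = Rᵀ R, let Ψ ∈ ℝ^{𝒩×N} satisfy Ψᵀ M Ψ = I_N, set A_r = Ψᵀ A Ψ, and let ĝ : EuclideanSpace ℝ (Fin 𝒩) → EuclideanSpace ℝ (Fin 𝒩) be continuous. Suppose Δt > 0 and u_r⁺, u_r⁰ ∈ EuclideanSpace ℝ (Fin N) satisfy the DEIM-reduced AVF step (u_r⁺ − u_r⁰) + (Δt/2)·A_r·(u_r⁺ + u_r⁰) + Δt·∫_0^1 Ψᵀ ĝ(Ψ·z(τ)) dτ = 0 with z(τ) = τ·u_r⁺ + (1−τ)·u_r⁰. Let C > 0 be such that ‖f(Ψ·z(τ)) − ĝ(Ψ·z(τ))‖₂ ≤ C for all τ ∈ [0,1]. If Δt ≤ ‖u_r⁺ − u_r⁰‖₂ / (‖R^{-1}‖₂ · C), then E(Ψ·u_r⁺) ≤ E(Ψ·u_r⁰). -/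
/-!
Write `δ = u_r⁺ - u_r⁰`. The fundamental theorem of calculus along the segment `Ψ z` and the
symmetry of `A` give `E (Ψ u_r⁺) - E (Ψ u_r⁰) = ⟪δ, ½ A_r (u_r⁺ + u_r⁰) + ∫ Ψᵀ f (Ψ z)⟫`.
Pairing the AVF step with `δ` shows that the same expression with `ĝ` in place of `f` equals
`-‖δ‖² / Δt`, so the energy difference is at most `-‖δ‖² / Δt + ‖δ‖ ‖∫ Ψᵀ (f - ĝ) (Ψ z)‖`.
Since `R Ψ` has orthonormal columns and `Ψᵀ = (R Ψ)ᵀ R⁻ᵀ`, we have `‖Ψᵀ‖₂ ≤ ‖R⁻¹‖₂`, so the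
last norm is at most `‖R⁻¹‖₂ C`, and the step-size condition makes the bound nonpositive.
-/

open MeasureTheory Matrix
open scoped InnerProductSpace

/-- The spectral (operator 2-)norm of a real matrix, i.e. the operator norm of the induced
linear map between Euclidean spaces. -/
noncomputable def spectralNorm2 {m n : ℕ} (A : Matrix (Fin m) (Fin n) ℝ) : ℝ :=
  ‖LinearMap.toContinuousLinearMap (Matrix.toEuclideanLin A)‖

theorem inner_add_nonpos_of_add_smul_eq_zero {V : Type*} [NormedAddCommGroup V]
    [InnerProductSpace ℝ V] {δ w e : V} {Δt K : ℝ} (hΔt : 0 < Δt) (hstep : δ + Δt • w = 0)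
    (he : ‖e‖ ≤ K) (hΔtK : Δt ≤ ‖δ‖ / K) : ⟪δ, w + e⟫_ℝ ≤ 0 := by
  have hK : 0 < K := by
    by_contra! hK
    linarith [div_nonpos_of_nonneg_of_nonpos (norm_nonneg δ) hK]
  have hstep_inner : ‖δ‖ ^ 2 + Δt * ⟪δ, w⟫_ℝ = 0 := by
    simpa [inner_add_right, real_inner_smul_right, real_inner_self_eq_norm_sq] using
      congrArg (⟪δ, ·⟫_ℝ) hstep
  have herr : ⟪δ, e⟫_ℝ ≤ ‖δ‖ * K :=
    (real_inner_le_norm δ e).trans (mul_le_mul_of_nonneg_left he (norm_nonneg δ))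
  have hΔtK' : Δt * K ≤ ‖δ‖ := (le_div_iff₀ hK).1 hΔtK
  refine nonpos_of_mul_nonpos_right ?_ hΔt
  rw [inner_add_right]
  nlinarith [mul_le_mul_of_nonneg_left hΔtK' (norm_nonneg δ)]

theorem sub_eq_integral_inner_gradient {W : Type*} [NormedAddCommGroup W]
    [InnerProductSpace ℝ W] [CompleteSpace W] {N : W → ℝ} {f : W → W}
    (hN : ∀ u, HasGradientAt N (f u) u) (hf : Continuous f) (x y : W) :
    N y - N x = ∫ τ in (0:ℝ)..1, ⟪f (τ • y + (1 - τ) • x), y - x⟫_ℝ := by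
  have hsegment (τ : ℝ) : HasDerivAt (fun t : ℝ => t • y + (1 - t) • x) (y - x) τ := by
    simpa [sub_eq_add_neg] using
      ((hasDerivAt_id τ).smul_const y).fun_add (((hasDerivAt_id τ).const_sub 1).smul_const x)
  have hderiv (τ : ℝ) : HasDerivAt (fun t : ℝ => N (t • y + (1 - t) • x))
      ⟪f (τ • y + (1 - τ) • x), y - x⟫_ℝ τ := by
    have h := (hN _).hasFDerivAt.comp_hasDerivAt τ (hsegment τ)
    rw [InnerProductSpace.toDual_apply_apply] at h
    exact h
  have hcont : Continuous fun τ : ℝ => ⟪f (τ • y + (1 - τ) • x), y - x⟫_ℝ := by fun_prop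
  rw [intervalIntegral.integral_eq_sub_of_hasDerivAt (fun τ _ => hderiv τ)
    (hcont.intervalIntegrable 0 1)]
  simp

theorem LinearMap.IsSymmetric.inner_map_self_sub_inner_map_self_s10 {V : Type*}
    [NormedAddCommGroup V] [InnerProductSpace ℝ V] {T : V →ₗ[ℝ] V} (hT : T.IsSymmetric)
    (x y : V) : ⟪x, T x⟫_ℝ - ⟪y, T y⟫_ℝ = ⟪x - y, T (x + y)⟫_ℝ := by
  have hxy : ⟪x, T y⟫_ℝ = ⟪y, T x⟫_ℝ := by rw [← hT, real_inner_comm]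
  rw [map_add, inner_sub_left, inner_add_right, inner_add_right, hxy]
  ring

namespace Matrix

variable {m n : Type*} [Fintype m] [Fintype n] [DecidableEq m] [DecidableEq n]

theorem inner_toEuclideanLin_transpose (B : Matrix m n ℝ) (x : EuclideanSpace ℝ n)
    (y : EuclideanSpace ℝ m) : ⟪x, toEuclideanLin Bᵀ y⟫_ℝ = ⟪toEuclideanLin B x, y⟫_ℝ := by
  rw [← conjTranspose_eq_transpose_of_trivial, toEuclideanLin_conjTranspose_eq_adjoint,
    LinearMap.adjoint_inner_right]

theorem inner_toEuclideanLin_transpose_mul_mul (Ψ : Matrix m n ℝ) (A : Matrix m m ℝ)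
    (x y : EuclideanSpace ℝ n) :
    ⟪x, toEuclideanLin (Ψᵀ * A * Ψ) y⟫_ℝ
      = ⟪toEuclideanLin Ψ x, toEuclideanLin A (toEuclideanLin Ψ y)⟫_ℝ := by
  simp only [toLpLin_mul_same, LinearMap.comp_apply, inner_toEuclideanLin_transpose]

theorem IsSymm.isSymmetric_toEuclideanLin {A : Matrix n n ℝ} (hA : A.IsSymm) :
    (toEuclideanLin A).IsSymmetric :=
  isSymmetric_toEuclideanLin_iff.mpr (isHermitian_iff_isSymm.mpr hA)

theorem sub_eq_inner_integral_transpose_gradient (Ψ : Matrix m n ℝ)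
    {N : EuclideanSpace ℝ m → ℝ} {f : EuclideanSpace ℝ m → EuclideanSpace ℝ m}
    (hN : ∀ u, HasGradientAt N (f u) u) (hf : Continuous f) (x y : EuclideanSpace ℝ n) :
    N (toEuclideanLin Ψ y) - N (toEuclideanLin Ψ x) =
      ⟪y - x, ∫ τ in (0:ℝ)..1,
        toEuclideanLin Ψᵀ (f (toEuclideanLin Ψ (τ • y + (1 - τ) • x)))⟫_ℝ := by
  have hΨ := (toEuclideanLin Ψ).continuous_of_finiteDimensional
  have hΨt := (toEuclideanLin Ψᵀ).continuous_of_finiteDimensional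
  have hcont : Continuous fun τ : ℝ =>
      toEuclideanLin Ψᵀ (f (toEuclideanLin Ψ (τ • y + (1 - τ) • x))) := by fun_prop
  rw [sub_eq_integral_inner_gradient hN hf, ← innerSL_apply_apply ℝ,
    ← (innerSL ℝ (y - x)).intervalIntegral_comp_comm (hcont.intervalIntegrable 0 1)]
  refine intervalIntegral.integral_congr fun τ _ => ?_
  rw [innerSL_apply_apply, inner_toEuclideanLin_transpose, real_inner_comm, map_sub, map_add,
    map_smul, map_smul]

theorem energy_sub_eq_inner_integral {A : Matrix m m ℝ} (hA : A.IsSymm) (Ψ : Matrix m n ℝ)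
    {N : EuclideanSpace ℝ m → ℝ} {f : EuclideanSpace ℝ m → EuclideanSpace ℝ m}
    (hN : ∀ u, HasGradientAt N (f u) u) (hf : Continuous f) (x y : EuclideanSpace ℝ n) :
    (1 / 2 * ⟪toEuclideanLin Ψ y, toEuclideanLin A (toEuclideanLin Ψ y)⟫_ℝ
        + N (toEuclideanLin Ψ y))
      - (1 / 2 * ⟪toEuclideanLin Ψ x, toEuclideanLin A (toEuclideanLin Ψ x)⟫_ℝ
        + N (toEuclideanLin Ψ x))
      = ⟪y - x, (1 / 2 : ℝ) • toEuclideanLin (Ψᵀ * A * Ψ) (y + x)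
          + ∫ τ in (0:ℝ)..1,
            toEuclideanLin Ψᵀ (f (toEuclideanLin Ψ (τ • y + (1 - τ) • x)))⟫_ℝ := by
  have hquad : ⟪toEuclideanLin Ψ y, toEuclideanLin A (toEuclideanLin Ψ y)⟫_ℝ
      - ⟪toEuclideanLin Ψ x, toEuclideanLin A (toEuclideanLin Ψ x)⟫_ℝ
      = ⟪y - x, toEuclideanLin (Ψᵀ * A * Ψ) (y + x)⟫_ℝ := by
    rw [inner_toEuclideanLin_transpose_mul_mul, map_sub, map_add]
    exact hA.isSymmetric_toEuclideanLin.inner_map_self_sub_inner_map_self_s10 _ _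
  rw [inner_add_right, real_inner_smul_right, ← Ψ.sub_eq_inner_integral_transpose_gradient hN hf]
  linarith

end Matrix

section L2OpNorm

open scoped Matrix.Norms.L2Operator

namespace Matrix

variable {𝕜 : Type*} [RCLike 𝕜] {m n : Type*} [Fintype m] [Fintype n] [DecidableEq n]

theorem norm_toEuclideanLin_apply_le (A : Matrix m n 𝕜) (x : EuclideanSpace 𝕜 n) :
    ‖toEuclideanLin A x‖ ≤ ‖A‖ * ‖x‖ :=
  ((toEuclideanLin.trans LinearMap.toContinuousLinearMap) A).le_opNorm x

theorem l2_opNorm_le_one_of_conjTranspose_mul_self_eq_one {Q : Matrix m n 𝕜} (hQ : Qᴴ * Q = 1) :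
    ‖Q‖ ≤ 1 := by
  have hone : ‖(1 : Matrix n n 𝕜)‖ ≤ 1 := by
    rw [l2_opNorm_def, LinearEquiv.trans_apply, toLpLin_one]
    exact ContinuousLinearMap.norm_id_le
  rw [← hQ, l2_opNorm_conjTranspose_mul_self] at hone
  nlinarith [norm_nonneg Q]

theorem l2_opNorm_transpose_le_of_transpose_mul_mul_eq_one [DecidableEq m] {R : Matrix m m ℝ}
    (hR : IsUnit R) {Ψ : Matrix m n ℝ} (hΨ : Ψᵀ * (Rᵀ * R) * Ψ = 1) : ‖Ψᵀ‖ ≤ ‖R⁻¹‖ := by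
  have hRΨ : (R * Ψ)ᴴ * (R * Ψ) = 1 := by
    simpa [conjTranspose_eq_transpose_of_trivial, Matrix.mul_assoc] using hΨ
  have hfactor : Ψᵀ = (R * Ψ)ᴴ * R⁻¹ᴴ := by
    rw [conjTranspose_eq_transpose_of_trivial, conjTranspose_eq_transpose_of_trivial,
      ← transpose_mul, ← Matrix.mul_assoc, nonsing_inv_mul _ ((isUnit_iff_isUnit_det R).mp hR),
      Matrix.one_mul]
  calc ‖Ψᵀ‖ ≤ ‖(R * Ψ)ᴴ‖ * ‖R⁻¹ᴴ‖ := hfactor ▸ l2_opNorm_mul _ _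
    _ = ‖R * Ψ‖ * ‖R⁻¹‖ := by rw [l2_opNorm_conjTranspose, l2_opNorm_conjTranspose]
    _ ≤ 1 * ‖R⁻¹‖ := by
      gcongr
      exact l2_opNorm_le_one_of_conjTranspose_mul_self_eq_one hRΨ
    _ = ‖R⁻¹‖ := one_mul _

end Matrix

theorem norm_toEuclideanLin_transpose_apply_le {m n : ℕ} {R : Matrix (Fin m) (Fin m) ℝ}
    (hR : IsUnit R) {Ψ : Matrix (Fin m) (Fin n) ℝ} (hΨ : Ψᵀ * (Rᵀ * R) * Ψ = 1)
    (v : EuclideanSpace ℝ (Fin m)) :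
    ‖Matrix.toEuclideanLin Ψᵀ v‖ ≤ spectralNorm2 R⁻¹ * ‖v‖ :=
  -- `spectralNorm2` is definitionally the `L2Operator` norm
  (Ψᵀ.norm_toEuclideanLin_apply_le v).trans <| by
    gcongr
    exact Matrix.l2_opNorm_transpose_le_of_transpose_mul_mul_eq_one hR hΨ

end L2OpNorm

theorem intervalIntegral.norm_integral_sub_integral_le {F : Type*} [NormedAddCommGroup F]
    [NormedSpace ℝ F] {u v : ℝ → F} {a b K : ℝ} (hab : a ≤ b) (hu : IntervalIntegrable u volume a b)
    (hv : IntervalIntegrable v volume a b) (h : ∀ τ ∈ Set.Icc a b, ‖u τ - v τ‖ ≤ K) :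
    ‖(∫ τ in a..b, u τ) - ∫ τ in a..b, v τ‖ ≤ K * (b - a) := by
  rw [← intervalIntegral.integral_sub hu hv, ← abs_of_nonneg (sub_nonneg.2 hab)]
  exact intervalIntegral.norm_integral_le_of_norm_le_const
    fun τ hτ => h τ (Set.Ioc_subset_Icc_self (by rwa [Set.uIoc_of_le hab] at hτ))

theorem deim_rom_conditional_energy_stability_general {𝒩 Nr : ℕ}
    (A : Matrix (Fin 𝒩) (Fin 𝒩) ℝ) (hA : A.IsSymm)
    (N : EuclideanSpace ℝ (Fin 𝒩) → ℝ)
    (f : EuclideanSpace ℝ (Fin 𝒩) → EuclideanSpace ℝ (Fin 𝒩))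
    (hN : ∀ u, HasGradientAt N (f u) u) (hf : Continuous f)
    (E : EuclideanSpace ℝ (Fin 𝒩) → ℝ)
    (hE : ∀ u : EuclideanSpace ℝ (Fin 𝒩),
      E u = (1 / 2) * ⟪u, Matrix.toEuclideanLin A u⟫_ℝ + N u)
    (R : Matrix (Fin 𝒩) (Fin 𝒩) ℝ) (hR : IsUnit R)
    (M : Matrix (Fin 𝒩) (Fin 𝒩) ℝ) (hM : M = Rᵀ * R)
    (Ψ : Matrix (Fin 𝒩) (Fin Nr) ℝ) (hΨ : Ψᵀ * M * Ψ = 1)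
    (Ar : Matrix (Fin Nr) (Fin Nr) ℝ) (hAr : Ar = Ψᵀ * A * Ψ)
    (g : EuclideanSpace ℝ (Fin 𝒩) → EuclideanSpace ℝ (Fin 𝒩)) (hg : Continuous g)
    (Δt : ℝ) (hΔt : 0 < Δt) (urp ur0 : EuclideanSpace ℝ (Fin Nr))
    (z : ℝ → EuclideanSpace ℝ (Fin Nr)) (hz : ∀ τ, z τ = τ • urp + (1 - τ) • ur0)
    (hstep : (urp - ur0) + (Δt / 2) • Matrix.toEuclideanLin Ar (urp + ur0)
        + Δt • (∫ τ in (0:ℝ)..1,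
            Matrix.toEuclideanLin Ψᵀ (g (Matrix.toEuclideanLin Ψ (z τ)))) = 0)
    (C : ℝ)
    (hbound : ∀ τ ∈ Set.Icc (0:ℝ) 1,
      ‖f (Matrix.toEuclideanLin Ψ (z τ)) - g (Matrix.toEuclideanLin Ψ (z τ))‖ ≤ C)
    (hstepsize : Δt ≤ ‖urp - ur0‖ / (spectralNorm2 R⁻¹ * C)) :
    E (Matrix.toEuclideanLin Ψ urp) ≤ E (Matrix.toEuclideanLin Ψ ur0) := by
  subst hM hAr
  obtain rfl : z = fun τ => τ • urp + (1 - τ) • ur0 := funext hz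
  set P := Matrix.toEuclideanLin Ψ
  set Pt := Matrix.toEuclideanLin Ψᵀ
  have hPz : Continuous fun τ : ℝ => P (τ • urp + (1 - τ) • ur0) := by
    have := P.continuous_of_finiteDimensional
    fun_prop
  have hPt := Pt.continuous_of_finiteDimensional
  set IF := ∫ τ in (0:ℝ)..1, Pt (f (P (τ • urp + (1 - τ) • ur0)))
  set IG := ∫ τ in (0:ℝ)..1, Pt (g (P (τ • urp + (1 - τ) • ur0)))
  have herr : ‖IF - IG‖ ≤ spectralNorm2 R⁻¹ * C * (1 - 0) :=
    intervalIntegral.norm_integral_sub_integral_le zero_le_one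
      ((hPt.comp (hf.comp hPz)).intervalIntegrable 0 1)
      ((hPt.comp (hg.comp hPz)).intervalIntegrable 0 1) fun τ hτ => by
        rw [← map_sub]
        exact (norm_toEuclideanLin_transpose_apply_le hR hΨ _).trans
          (mul_le_mul_of_nonneg_left (hbound τ hτ) (norm_nonneg _))
  rw [sub_zero, mul_one] at herr
  have hstep' : (urp - ur0)
      + Δt • ((1 / 2 : ℝ) • Matrix.toEuclideanLin (Ψᵀ * A * Ψ) (urp + ur0) + IG) = 0 := by
    rw [← hstep]
    module
  have hnonpos := inner_add_nonpos_of_add_smul_eq_zero hΔt hstep' herr hstepsize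
  rw [add_add_sub_cancel] at hnonpos
  rw [hE, hE, ← sub_nonpos, Matrix.energy_sub_eq_inner_integral hA Ψ hN hf]
  exact hnonpos

/-- Conditional energy stability of the DEIM reduced order model:
with symmetric stiffness matrix `A`, discrete energy `E u = (1/2)⟪u, Au⟫ + N u` with
`f = ∇N`, mass matrix `M = Rᵀ R` (`R` invertible), `M`-orthonormal basis matrix `Ψ`
(`Ψᵀ M Ψ = I`), reduced stiffness matrix `A_r = Ψᵀ A Ψ`, and DEIM approximation `ĝ` of `f`,
if `u_r⁺, u_r⁰` satisfy the DEIM-reduced AVF step, the DEIM error along the segment is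
bounded by `C > 0`, and `Δt ≤ ‖u_r⁺ - u_r⁰‖₂ / (‖R⁻¹‖₂ C)`, then `E (Ψ u_r⁺) ≤ E (Ψ u_r⁰)`. -/
theorem deim_rom_conditional_energy_stability {𝒩 Nr : ℕ}
    (A : Matrix (Fin 𝒩) (Fin 𝒩) ℝ) (hA : A.IsSymm)
    (N : EuclideanSpace ℝ (Fin 𝒩) → ℝ)
    (f : EuclideanSpace ℝ (Fin 𝒩) → EuclideanSpace ℝ (Fin 𝒩))
    (hN : ∀ u, HasGradientAt N (f u) u) (hf : Continuous f)
    (E : EuclideanSpace ℝ (Fin 𝒩) → ℝ)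
    (hE : ∀ u : EuclideanSpace ℝ (Fin 𝒩),
      E u = (1 / 2) * ⟪u, Matrix.toEuclideanLin A u⟫_ℝ + N u)
    (R : Matrix (Fin 𝒩) (Fin 𝒩) ℝ) (hR : IsUnit R)
    (M : Matrix (Fin 𝒩) (Fin 𝒩) ℝ) (hM : M = Rᵀ * R)
    (Ψ : Matrix (Fin 𝒩) (Fin Nr) ℝ) (hΨ : Ψᵀ * M * Ψ = 1)
    (Ar : Matrix (Fin Nr) (Fin Nr) ℝ) (hAr : Ar = Ψᵀ * A * Ψ)
    (g : EuclideanSpace ℝ (Fin 𝒩) → EuclideanSpace ℝ (Fin 𝒩)) (hg : Continuous g)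
    (Δt : ℝ) (hΔt : 0 < Δt) (urp ur0 : EuclideanSpace ℝ (Fin Nr))
    (z : ℝ → EuclideanSpace ℝ (Fin Nr)) (hz : ∀ τ, z τ = τ • urp + (1 - τ) • ur0)
    (hstep : (urp - ur0) + (Δt / 2) • Matrix.toEuclideanLin Ar (urp + ur0)
        + Δt • (∫ τ in (0:ℝ)..1,
            Matrix.toEuclideanLin Ψᵀ (g (Matrix.toEuclideanLin Ψ (z τ)))) = 0)
    (C : ℝ) (hC : 0 < C)
    (hbound : ∀ τ ∈ Set.Icc (0:ℝ) 1,
      ‖f (Matrix.toEuclideanLin Ψ (z τ)) - g (Matrix.toEuclideanLin Ψ (z τ))‖ ≤ C)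
    (hstepsize : Δt ≤ ‖urp - ur0‖ / (spectralNorm2 R⁻¹ * C)) :
    E (Matrix.toEuclideanLin Ψ urp) ≤ E (Matrix.toEuclideanLin Ψ ur0) :=
  deim_rom_conditional_energy_stability_general A hA N f hN hf E hE R hR M hM Ψ hΨ Ar hAr g hg Δt
    hΔt urp ur0 z hz hstep C hbound hstepsize
end
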